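/- Let L = ℤ⁸, c = (1,-1,1,-1,1,-1,1,-1)ᵀ, T(x) = cᵀx, v₁ = (-1,1,-1,1,1,1,1,1)ᵀ, and (r,s) = (2,1). Then the sublattice spanned by the vectors 2eᵢ + cᵢ v₁ (i = 1,…,8) equals 2Γ₈', where Γ₈' = {x ∈ ℤ⁸ : Σxᵢ even} ∪ {x ∈ (ℤ+1/2)⁸ : Σxᵢ odd} is the odd coordinate system E₈ lattice. -/

import Mathlib

/-!
Write `T x = c ⬝ᵥ x`. Since `T v₁ = -4`, the linear form `f = -T/2` satisfies `f v₁ = 2`, so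
`ψ x = x - f x • v₁ = x + (T x / 2) • v₁` is a reflection, in particular an involution, and the
generators are `2 • ψ eᵢ`. Hence their `ℤ`-span is `2 • ψ(ℤ⁸)`, and it suffices to show
`ψ(ℤ⁸) = Γ₈'`. By involutivity this follows from `ψ(ℤ⁸) ⊆ Γ₈'` and `ψ(Γ₈') ⊆ ℤ⁸`, which are
congruences modulo 2 and 4 for the integer vector `w = 2x`: `x ∈ Γ₈'` means that all `wᵢ` have
the same parity `t` and `∑ wᵢ ≡ 2t [ZMOD 4]`.
-/

open Pointwise

/-- The odd coordinate system version `Γ₈'` of the `E₈` lattice: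
integer vectors with even coordinate sum, together with half-integer
vectors with odd coordinate sum. -/
def GammaEightOdd : Set (Fin 8 → ℝ) :=
  {x | (∀ i, ∃ k : ℤ, x i = k) ∧ ∃ k : ℤ, ∑ i, x i = 2 * k} ∪
    {x | (∀ i, ∃ k : ℤ, x i = k + 1 / 2) ∧ ∃ k : ℤ, ∑ i, x i = 2 * k + 1}

open Module Submodule Set

def integerPoints (ι : Type*) : Set (ι → ℝ) := {x | ∀ i, ∃ k : ℤ, x i = k}

lemma coe_span_int_range_single {ι : Type*} [Fintype ι] [DecidableEq ι] :
    (span ℤ (range fun i : ι => (Pi.single i 1 : ι → ℝ)) : Set (ι → ℝ)) = integerPoints ι := by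
  ext x
  have hrange : range (Pi.basisFun ℝ ι) = range fun i : ι => (Pi.single i 1 : ι → ℝ) :=
    congrArg range (funext (Pi.basisFun_apply ℝ ι))
  have := (Pi.basisFun ℝ ι).mem_span_iff_repr_mem ℤ x
  simp only [hrange, Pi.basisFun_repr, mem_range, eq_intCast] at this
  simp only [SetLike.mem_coe, this, integerPoints, mem_ofPred_eq, eq_comm]

lemma coe_span_int_range_map_single {ι M : Type*} [Fintype ι] [DecidableEq ι] [AddCommGroup M]
    [Module ℝ M] (φ : (ι → ℝ) →ₗ[ℝ] M) :
    (span ℤ (range fun i => φ (Pi.single i 1)) : Set M) = φ '' integerPoints ι := by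
  rw [← coe_span_int_range_single, ← LinearMap.coe_restrictScalars ℤ φ, ← map_coe, ← span_image,
    ← range_comp]
  rfl

lemma intCast_dotProduct {ι : Type*} [Fintype ι] (v w : ι → ℤ) :
    ((v ⬝ᵥ w : ℤ) : ℝ) = (Int.cast ∘ v) ⬝ᵥ (Int.cast ∘ w) :=
  RingHom.map_dotProduct (Int.castRingHom ℝ) v w

lemma exists_intCast_mul_add_half_iff {r : ℝ} {n : ℤ} (h : 2 * r = n) (m b : ℤ) :
    (∃ k : ℤ, r = m * k + b / 2) ↔ n ≡ b [ZMOD 2 * m] := by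
  rw [Int.modEq_iff_dvd]
  constructor
  · rintro ⟨k, rfl⟩
    refine ⟨-k, ?_⟩
    exact_mod_cast (by linarith : (b : ℝ) - n = 2 * m * -k)
  · rintro ⟨k, hk⟩
    refine ⟨-k, ?_⟩
    have : (b : ℝ) - n = 2 * m * k := by exact_mod_cast hk
    push_cast
    linarith

lemma mem_gammaEightOdd_iff {x : Fin 8 → ℝ} {w : Fin 8 → ℤ} (hw : ∀ i, 2 * x i = w i) :
    x ∈ GammaEightOdd ↔
      (∀ i, w i ≡ 0 [ZMOD 2]) ∧ ∑ i, w i ≡ 0 [ZMOD 4] ∨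
        (∀ i, w i ≡ 1 [ZMOD 2]) ∧ ∑ i, w i ≡ 2 [ZMOD 4] := by
  have hsum : 2 * ∑ i, x i = ((∑ i, w i : ℤ) : ℝ) := by
    push_cast
    rw [Finset.mul_sum]
    exact Finset.sum_congr rfl fun i _ => hw i
  have hint (i : Fin 8) : (∃ k : ℤ, x i = k) ↔ w i ≡ 0 [ZMOD 2] := by
    simpa using exists_intCast_mul_add_half_iff (hw i) 1 0
  have hhalf (i : Fin 8) : (∃ k : ℤ, x i = k + 1 / 2) ↔ w i ≡ 1 [ZMOD 2] := by
    simpa using exists_intCast_mul_add_half_iff (hw i) 1 1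
  have heven : (∃ k : ℤ, ∑ i, x i = 2 * k) ↔ ∑ i, w i ≡ 0 [ZMOD 4] := by
    simpa [show (2 : ℤ) * 2 = 4 by rfl] using exists_intCast_mul_add_half_iff hsum 2 0
  have hodd : (∃ k : ℤ, ∑ i, x i = 2 * k + 1) ↔ ∑ i, w i ≡ 2 [ZMOD 4] := by
    simpa [show (2 : ℤ) * 2 = 4 by rfl] using exists_intCast_mul_add_half_iff hsum 2 2
  simp only [GammaEightOdd, mem_union, mem_ofPred_eq, hint, hhalf, heven, hodd]

lemma exists_two_mul_eq_intCast_of_mem_gammaEightOdd {x : Fin 8 → ℝ}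
    (hx : x ∈ GammaEightOdd) : ∃ w : Fin 8 → ℤ, ∀ i, 2 * x i = w i := by
  rcases hx with ⟨hx, -⟩ | ⟨hx, -⟩ <;> choose k hk using hx
  · exact ⟨fun i => 2 * k i, fun i => by rw [hk]; push_cast; ring⟩
  · exact ⟨fun i => 2 * k i + 1, fun i => by rw [hk]; push_cast; ring⟩

def cE8 : Fin 8 → ℤ := ![1, -1, 1, -1, 1, -1, 1, -1]

def vE8 : Fin 8 → ℤ := ![-1, 1, -1, 1, 1, 1, 1, 1]

lemma intCast_cE8 : (Int.cast ∘ cE8 : Fin 8 → ℝ) = ![1, -1, 1, -1, 1, -1, 1, -1] := by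
  ext i; fin_cases i <;> simp [cE8]

lemma intCast_vE8 : (Int.cast ∘ vE8 : Fin 8 → ℝ) = ![-1, 1, -1, 1, 1, 1, 1, 1] := by
  ext i; fin_cases i <;> simp [vE8]

noncomputable def e8Form : Dual ℝ (Fin 8 → ℝ) :=
  -(2⁻¹ : ℝ) • dotProductEquiv ℝ (Fin 8) (Int.cast ∘ cE8)

lemma cE8_dotProduct_vE8 : cE8 ⬝ᵥ vE8 = -4 := by decide

lemma e8Form_apply_vE8 : e8Form (Int.cast ∘ vE8) = 2 := by
  rw [e8Form, LinearMap.smul_apply, dotProductEquiv_apply_apply, ← intCast_dotProduct,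
    cE8_dotProduct_vE8]
  norm_num

noncomputable def e8Reflection : (Fin 8 → ℝ) ≃ₗ[ℝ] (Fin 8 → ℝ) := reflection e8Form_apply_vE8

lemma e8Reflection_apply (x : Fin 8 → ℝ) (i : Fin 8) :
    e8Reflection x i = x i + ((Int.cast ∘ cE8) ⬝ᵥ x) / 2 * vE8 i := by
  simp [e8Reflection, Module.reflection_apply, e8Form, div_eq_inv_mul]

lemma two_smul_e8Reflection_single (i : Fin 8) :
    (2 : ℝ) • e8Reflection (Pi.single i 1) =
      (2 : ℝ) • Pi.single i 1 + (cE8 i : ℝ) • (Int.cast ∘ vE8 : Fin 8 → ℝ) := by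
  ext j
  simp only [Pi.add_apply, Pi.smul_apply, smul_eq_mul, e8Reflection_apply, dotProduct_single,
    Function.comp_apply, mul_one]
  ring

lemma e8Reflection_intCast_mem_gammaEightOdd (z : Fin 8 → ℤ) :
    e8Reflection (Int.cast ∘ z) ∈ GammaEightOdd := by
  have hw (i : Fin 8) :
      2 * e8Reflection (Int.cast ∘ z) i = ((2 * z i + (cE8 ⬝ᵥ z) * vE8 i : ℤ) : ℝ) := by
    rw [e8Reflection_apply]
    push_cast [intCast_dotProduct]
    simp only [Function.comp_apply]
    ring
  rw [mem_gammaEightOdd_iff hw]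
  simp only [Fin.forall_fin_succ, Int.ModEq, Fin.sum_univ_eight, dotProduct, cE8, vE8,
    Matrix.cons_val, Fin.succ_zero_eq_one, Fin.succ_one_eq_two, Fin.reduceSucc, IsEmpty.forall_iff,
    and_true]
  omega

lemma exists_intCast_eq_e8Reflection_apply_of_mem_gammaEightOdd {x : Fin 8 → ℝ}
    (hx : x ∈ GammaEightOdd) (i : Fin 8) : ∃ k : ℤ, e8Reflection x i = k := by
  obtain ⟨w, hw⟩ := exists_two_mul_eq_intCast_of_mem_gammaEightOdd hx
  have hxw : x = (2⁻¹ : ℝ) • (Int.cast ∘ w) := funext fun i => by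
    simp only [Pi.smul_apply, Function.comp_apply, smul_eq_mul]; linarith [hw i]
  -- `4 • ψ x = 2 • w + T w • v₁`
  obtain ⟨k, hk⟩ : 4 ∣ 2 * w i + (cE8 ⬝ᵥ w) * vE8 i := by
    have hcong := (mem_gammaEightOdd_iff hw).1 hx
    simp only [Fin.forall_fin_succ, Int.ModEq, Fin.sum_univ_eight, Fin.succ_zero_eq_one,
      Fin.succ_one_eq_two, Fin.reduceSucc, IsEmpty.forall_iff, and_true] at hcong
    fin_cases i <;>
      simp only [dotProduct, Fin.sum_univ_eight, cE8, vE8, Matrix.cons_val, Fin.reduceFinMk,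
        Fin.zero_eta, Fin.mk_one] <;>
      omega
  refine ⟨k, ?_⟩
  have hk' : ((2 * w i + (cE8 ⬝ᵥ w) * vE8 i : ℤ) : ℝ) = 4 * k := by exact_mod_cast hk
  push_cast [intCast_dotProduct] at hk'
  rw [e8Reflection_apply, hxw, dotProduct_smul]
  simp only [Pi.smul_apply, Function.comp_apply, smul_eq_mul] at hk' ⊢
  linarith

lemma image_e8Reflection_integerPoints :
    e8Reflection '' integerPoints (Fin 8) = GammaEightOdd := by
  refine subset_antisymm ?_ fun x hx =>
    ⟨e8Reflection x, ?_, involutive_reflection e8Form_apply_vE8 x⟩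
  · rintro _ ⟨x, hx, rfl⟩
    choose z hz using hx
    obtain rfl : x = Int.cast ∘ z := funext hz
    exact e8Reflection_intCast_mem_gammaEightOdd z
  · exact exists_intCast_eq_e8Reflection_apply_of_mem_gammaEightOdd hx

theorem stmt_18 (c v₁ : Fin 8 → ℝ)
    (hc : c = ![1, -1, 1, -1, 1, -1, 1, -1])
    (hv : v₁ = ![-1, 1, -1, 1, 1, 1, 1, 1]) :
    (Submodule.span ℤ
        (Set.range fun i : Fin 8 =>
          ((2 : ℝ) • (Pi.single i (1 : ℝ) : Fin 8 → ℝ) + c i • v₁ : Fin 8 → ℝ)) :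
      Set (Fin 8 → ℝ)) = (2 : ℝ) • GammaEightOdd := by
  have hgen (i : Fin 8) : (2 : ℝ) • (Pi.single i (1 : ℝ) : Fin 8 → ℝ) + c i • v₁ =
      ((2 : ℝ) • e8Reflection.toLinearMap) (Pi.single i 1) := by
    rw [hc, hv, ← intCast_cE8, ← intCast_vE8, LinearMap.smul_apply, LinearEquiv.coe_coe,
      two_smul_e8Reflection_single, Function.comp_apply]
  rw [funext hgen, coe_span_int_range_map_single, ← image_e8Reflection_integerPoints,
    ← Set.image_smul, Set.image_image]
  rfl
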